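/- arXiv:2105.02442 — 4 statements merged into one kernel-verified Lean document; each statement's English description precedes it below -/
import Mathlib

section
/- Let L be a finite nonabelian simple group whose order is divisible by a prime r, and let x ∈ Aut(L) be nontrivial. Suppose x leaves invariant a subgroup H of L and a normal subgroup N of H, thus inducing an automorphism x̄ of H/N. Suppose further that H/N contains a nonabelian simple x̄-invariant subgroup L̄ on which x̄ acts nontrivially and whose order is divisible by r. Then β_r(x,L) ≤ β_r(x̄, L̄), where in the right-hand side x̄ is regarded as an automorphism of L̄. -/
/-- The conjugate `x^g` of an automorphism `x` of `L` by the inner automorphism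
induced by `g ∈ L` (identifying `L` with its inner automorphisms in `Aut L`). -/
def autConj {L : Type} [Group L] (x : MulAut L) (g : L) : MulAut L :=
  (MulAut.conj g)⁻¹ * x * MulAut.conj g

/-- `betaLE x t m` says that `β_t(x, L) ≤ m`: there exist `g₁, …, g_m ∈ L` such that
`t` divides the order of the subgroup of `Aut L` generated by `x^{g₁}, …, x^{g_m}`. -/
def betaLE {L : Type} [Group L] (x : MulAut L) (t m : ℕ) : Prop :=
  ∃ g : Fin m → L,
    t ∣ Nat.card (Subgroup.closure (Set.range fun i => autConj x (g i)) : Subgroup (MulAut L))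

/-!
Lift the generators `ḡᵢ ∈ L̄` to `hᵢ ∈ H`. Every `x^{hᵢ}` stabilises `H`, and restriction to `H`,
passage to `H/N` and restriction to `L̄` are homomorphisms on the relevant stabilisers in the
automorphism groups. Each of them maps the conjugates of one stage to those of the next, ending
at `x̄^{ḡᵢ}`; hence `|⟨x̄^{ḡᵢ}⟩|` divides `|⟨x^{hᵢ}⟩|`.
-/

open Pointwise Subgroup

namespace MulAut

variable {G : Type*} [Group G]

def stabilizerRestrict (H : Subgroup G) : MulAction.stabilizer (MulAut G) H →* MulAut H :=
  MonoidHom.mk' (fun f => ((f : MulAut G).subgroupMap H).trans (MulEquiv.subgroupCongr f.2))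
    fun _ _ => rfl

@[simp]
theorem stabilizerRestrict_apply_coe (H : Subgroup G) (f : MulAction.stabilizer (MulAut G) H)
    (h : H) : (stabilizerRestrict H f h : G) = (f : MulAut G) h :=
  rfl

theorem stabilizerRestrict_conj {H : Subgroup G} (h : H) :
    stabilizerRestrict H ⟨conj (h : G), conj_smul_eq_self_of_mem h.2⟩ = conj h :=
  rfl

def stabilizerQuotient (N : Subgroup G) [N.Normal] :
    MulAction.stabilizer (MulAut G) N →* MulAut (G ⧸ N) :=
  MonoidHom.mk' (fun f => QuotientGroup.congr N N (f : MulAut G) f.2) fun _ _ => by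
    ext q
    induction q using QuotientGroup.induction_on
    rfl

@[simp]
theorem stabilizerQuotient_apply_mk (N : Subgroup G) [N.Normal]
    (f : MulAction.stabilizer (MulAut G) N) (g : G) :
    stabilizerQuotient N f (g : G ⧸ N) = ((f : MulAut G) g : G ⧸ N) :=
  rfl

theorem stabilizerQuotient_conj (N : Subgroup G) [N.Normal] (g : G) :
    stabilizerQuotient N ⟨conj g, Normal.conj_smul_eq_self g N⟩ = conj (g : G ⧸ N) := by
  ext q
  induction q using QuotientGroup.induction_on
  rfl

end MulAut

theorem Subgroup.card_closure_range_map_dvd {A B ι : Type*} [Group A] [Group B]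
    {P : Subgroup A} (ρ : P →* B) (a : ι → P) :
    Nat.card (Subgroup.closure (Set.range (ρ ∘ a))) ∣
      Nat.card (Subgroup.closure (Set.range fun i => (a i : A))) := by
  have hρ : Subgroup.closure (Set.range (ρ ∘ a)) = (Subgroup.closure (Set.range a)).map ρ := by
    rw [MonoidHom.map_closure, Set.range_comp]
  have hP : Subgroup.closure (Set.range fun i => (a i : A)) =
      (Subgroup.closure (Set.range a)).map P.subtype := by
    rw [MonoidHom.map_closure, ← Set.range_comp]
    rfl
  rw [hρ, hP, card_map_of_injective P.subtype_injective]
  exact card_map_dvd _ ρ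

theorem card_closure_autConj_dvd {G M ι : Type} [Group G] [Group M] {P : Subgroup (MulAut G)}
    (ρ : P →* MulAut M) (x : P) {g : ι → G} {g' : ι → M} (hg : ∀ i, MulAut.conj (g i) ∈ P)
    (hρ : ∀ i, ρ ⟨_, hg i⟩ = MulAut.conj (g' i)) :
    Nat.card (Subgroup.closure (Set.range fun i => autConj (ρ x) (g' i))) ∣
      Nat.card (Subgroup.closure (Set.range fun i => autConj (x : MulAut G) (g i))) := by
  have := card_closure_range_map_dvd ρ fun i => (⟨_, hg i⟩ : P)⁻¹ * x * ⟨_, hg i⟩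
  simp only [Function.comp_def, map_mul, map_inv, hρ] at this
  exact this

theorem statement_3_general (L : Type) [Group L] (r : ℕ) (x : MulAut L)
    -- `x` leaves invariant a subgroup `H` of `L` …
    (H : Subgroup L) (hHx : Subgroup.map x.toMonoidHom H = H)
    -- … and a normal subgroup `N` of `H`, …
    (N : Subgroup ↥H) [N.Normal]
    -- the restriction of `x` to `H` …
    (xH : MulAut ↥H) (hxH : ∀ h : ↥H, ((xH h : ↥H) : L) = x (h : L))
    (hNx : Subgroup.map xH.toMonoidHom N = N)
    -- … thus inducing an automorphism `x̄` of `H/N`.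
    (xbar : MulAut (↥H ⧸ N))
    (hxbar : ∀ h : ↥H, xbar (QuotientGroup.mk h) = QuotientGroup.mk (xH h))
    -- `H/N` contains a nonabelian simple `x̄`-invariant subgroup `L̄` …
    (Lbar : Subgroup (↥H ⧸ N))
    (hLbarx : Subgroup.map xbar.toMonoidHom Lbar = Lbar)
    -- `x̄` regarded as an automorphism of `L̄`
    (xres : MulAut ↥Lbar) (hxres : ∀ a : ↥Lbar, ((xres a : ↥Lbar) : ↥H ⧸ N) = xbar (a : ↥H ⧸ N)) :
    -- conclusion: `β_r(x, L) ≤ β_r(x̄, L̄)`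
    ∀ m : ℕ, betaLE xres r m → betaLE x r m := by
  rintro m ⟨g, hg⟩
  choose h hh using fun i => QuotientGroup.mk_surjective (g i : ↥H ⧸ N)
  refine ⟨fun i => (h i : L), hg.trans ?_⟩
  have hres : MulAut.stabilizerRestrict Lbar ⟨xbar, hLbarx⟩ = xres := by
    ext a
    simp only [MulAut.stabilizerRestrict_apply_coe, hxres]
  have hquot : MulAut.stabilizerQuotient N ⟨xH, hNx⟩ = xbar := by
    ext q
    induction q using QuotientGroup.induction_on
    simp only [MulAut.stabilizerQuotient_apply_mk, hxbar]
  have hrestr : MulAut.stabilizerRestrict H ⟨x, hHx⟩ = xH := by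
    ext k
    simp only [MulAut.stabilizerRestrict_apply_coe, hxH]
  have stepLbar := hres ▸ card_closure_autConj_dvd (MulAut.stabilizerRestrict Lbar) ⟨xbar, hLbarx⟩
    (fun i => conj_smul_eq_self_of_mem (g i).2) fun i => MulAut.stabilizerRestrict_conj (g i)
  have stepN := hquot ▸ card_closure_autConj_dvd (MulAut.stabilizerQuotient N) ⟨xH, hNx⟩
    (g' := fun i => (g i : ↥H ⧸ N)) (fun i => Normal.conj_smul_eq_self (h i) N)
    fun i => hh i ▸ MulAut.stabilizerQuotient_conj N (h i)
  have stepH := hrestr ▸ card_closure_autConj_dvd (MulAut.stabilizerRestrict H) ⟨x, hHx⟩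
    (fun i => conj_smul_eq_self_of_mem (h i).2) fun i => MulAut.stabilizerRestrict_conj (h i)
  exact stepLbar.trans (stepN.trans stepH)

theorem statement_3 (L : Type) [Group L] [Finite L] (hLsimple : IsSimpleGroup L)
    (hLnonab : ∃ a b : L, a * b ≠ b * a)
    (r : ℕ) (hr : r.Prime) (hrL : r ∣ Nat.card L)
    (x : MulAut L) (hx : x ≠ 1)
    -- `x` leaves invariant a subgroup `H` of `L` …
    (H : Subgroup L) (hHx : Subgroup.map x.toMonoidHom H = H)
    -- … and a normal subgroup `N` of `H`, …
    (N : Subgroup ↥H) [N.Normal]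
    -- the restriction of `x` to `H` …
    (xH : MulAut ↥H) (hxH : ∀ h : ↥H, ((xH h : ↥H) : L) = x (h : L))
    (hNx : Subgroup.map xH.toMonoidHom N = N)
    -- … thus inducing an automorphism `x̄` of `H/N`.
    (xbar : MulAut (↥H ⧸ N))
    (hxbar : ∀ h : ↥H, xbar (QuotientGroup.mk h) = QuotientGroup.mk (xH h))
    -- `H/N` contains a nonabelian simple `x̄`-invariant subgroup `L̄` …
    (Lbar : Subgroup (↥H ⧸ N)) (hLbarSimple : IsSimpleGroup ↥Lbar)
    (hLbarNonab : ∃ a b : ↥Lbar, a * b ≠ b * a)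
    (hLbarx : Subgroup.map xbar.toMonoidHom Lbar = Lbar)
    -- … on which `x̄` acts nontrivially, and whose order is divisible by `r`
    (hact : ∃ a : ↥H ⧸ N, a ∈ Lbar ∧ xbar a ≠ a)
    (hrLbar : r ∣ Nat.card ↥Lbar)
    -- `x̄` regarded as an automorphism of `L̄`
    (xres : MulAut ↥Lbar) (hxres : ∀ a : ↥Lbar, ((xres a : ↥Lbar) : ↥H ⧸ N) = xbar (a : ↥H ⧸ N)) :
    -- conclusion: `β_r(x, L) ≤ β_r(x̄, L̄)`
    ∀ m : ℕ, betaLE xres r m → betaLE x r m :=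
  statement_3_general L r x H hHx N xH hxH hNx xbar hxbar Lbar hLbarx xres hxres
end

section
/- Let q ≥ 4 be a prime power, L = PSL_2(q), and let r be an odd prime that divides |L| but does not divide q. Then for every involution x of the group PGL_2(q) (which contains L = PSL_2(q) as a normal subgroup), the least m for which there exist g_1, …, g_m ∈ L with r dividing the order of the subgroup ⟨x^{g_1}, …, x^{g_m}⟩ of PGL_2(q) equals 2; in particular, there exist g_1, g_2 ∈ L such that r divides |⟨x^{g_1}, x^{g_2}⟩|. -/
/-
Lift the involution `x` to a matrix `X` with `X²` scalar; as `X` is not scalar, Cayley–Hamilton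
forces `tr X = 0`. Lift an element of order `r` of `PSL₂` to `Z ∈ SL₂` with trace `τ`; since
`r ≠ 2` and `r ≠ p` we have `τ ≠ 0` and `τ² ≠ 4` (otherwise `Z² = -1`, or `Z - τ/2` is
nilpotent and `Z^p` is scalar).

Over a finite field one finds a trace-zero `W` with `det W = det X` and `tr (X W) = det X · τ`.
Non-scalar `2 × 2` matrices with the same trace and determinant are conjugate (both are conjugate
to the companion matrix), and for trace-zero ones the conjugator can be taken in `SL₂`: the
determinants `a² + det X · b²` of the elements `a + b X` of the centralizer of `X` cover `F^×`.
So `W = X^g` with `g ∈ PSL₂`, and `x · x^g` lifts to `X W`, which has the trace and determinant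
of `det X · Z`; hence `x · x^g` is conjugate to the image of `Z` and has order `r`. A single
conjugate of `x` generates a group of order `2`, which `r` does not divide.
-/

open Matrix

/-- `PGL_n(q)`: the quotient of `GL_n(F_q)` by its center (the scalar matrices). -/
abbrev PGL (n : ℕ) (F : Type) [Field F] : Type :=
  GL (Fin n) F ⧸ Subgroup.center (GL (Fin n) F)

/-- `PSL_n(q)` regarded as a (normal) subgroup of `PGL_n(q)`: the image in `PGL_n(q)`
of `SL_n(F_q) ≤ GL_n(F_q)`. -/
def PSLinPGL (n : ℕ) (F : Type) [Field F] : Subgroup (PGL n F) :=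
  Subgroup.map (QuotientGroup.mk' (Subgroup.center (GL (Fin n) F)))
    (Matrix.SpecialLinearGroup.toGL (n := Fin n) (R := F)).range

theorem two_le_of_dvd_card_closure_conj {G : Type*} [Group G] {x : G} {r : ℕ}
    (hrx : ¬ r ∣ orderOf x) {m : ℕ} {g : Fin m → G}
    (h : r ∣ Nat.card (Subgroup.closure (Set.range fun i => (g i)⁻¹ * x * g i))) :
    2 ≤ m := by
  by_contra! hm
  interval_cases m
  · rw [Set.range_eq_empty, Subgroup.closure_empty, Subgroup.card_bot, Nat.dvd_one] at h
    exact hrx (h ▸ one_dvd _)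
  · rw [Set.range_unique, ← Subgroup.zpowers_eq_closure, Nat.card_zpowers] at h
    have hconj : SemiconjBy (g default) ((g default)⁻¹ * x * g default) x := by
      simp [SemiconjBy, mul_assoc]
    exact hrx (hconj.orderOf_eq ▸ h)

namespace FiniteField

variable {F : Type*} [Field F] [Fintype F]

theorem exists_sq_add_mul_sq_eq {D : F} (hD : D ≠ 0) (e : F) :
    ∃ a b : F, a ^ 2 + D * b ^ 2 = e := by
  by_cases h2 : ringChar F = 2
  · obtain ⟨a, rfl⟩ := isSquare_of_char_two h2 e
    exact ⟨a, 0, by ring⟩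
  · obtain ⟨a, b, hab⟩ := exists_root_sum_quadratic (f := .X ^ 2 - .C e) (g := .C D * .X ^ 2)
      (by compute_degree!) (by compute_degree!) (odd_card_of_char_ne_two h2)
    refine ⟨a, b, ?_⟩
    simp only [Polynomial.eval_sub, Polynomial.eval_mul, Polynomial.eval_pow, Polynomial.eval_X,
      Polynomial.eval_C] at hab
    linear_combination hab

theorem exists_sq_add_mul_eq_zero {D : F} (hD : D ≠ 0) (τ : F) :
    ∃ a b : F, a ^ 2 + D * (b ^ 2 + τ * b + 1) = 0 := by
  by_cases h2 : ringChar F = 2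
  · have : CharP F 2 := ringChar.of_eq h2
    obtain ⟨a, ha⟩ := isSquare_of_char_two h2 D
    exact ⟨a, 0, by linear_combination ha + a ^ 2 * CharTwo.two_eq_zero (R := F)⟩
  · obtain ⟨a, b, hab⟩ := exists_root_sum_quadratic (f := .X ^ 2)
      (g := .C D * (.X ^ 2 + .C τ * .X + 1))
      (by compute_degree!) (by compute_degree!) (odd_card_of_char_ne_two h2)
    refine ⟨a, b, ?_⟩
    simpa using hab

end FiniteField

namespace Matrix

variable {F : Type*} [Field F]

local notation "M₂" => Matrix (Fin 2) (Fin 2) F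

theorem sq_fin_two (M : M₂) : M ^ 2 = M.trace • M - M.det • 1 := by
  have h := M.aeval_self_charpoly
  rw [charpoly_fin_two] at h
  simp only [map_add, map_sub, map_mul, Polynomial.aeval_X_pow, Polynomial.aeval_C,
    Polynomial.aeval_X, Algebra.algebraMap_eq_smul_one, smul_one_mul] at h
  rw [← sub_eq_zero, ← h]
  abel

theorem det_smul_one_add_smul (a b : F) (M : M₂) :
    (a • 1 + b • M).det = a ^ 2 + a * b * M.trace + b ^ 2 * M.det := by
  simp only [det_fin_two, trace_fin_two, add_apply, smul_apply, smul_eq_mul, one_apply_eq,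
    one_apply_ne zero_ne_one, one_apply_ne one_ne_zero]
  ring

theorem ne_smul_one_of_trace_sq_ne {M : M₂} (h : M.trace ^ 2 ≠ 4 * M.det) (c : F) :
    M ≠ c • 1 := by
  rintro rfl
  apply h
  simp only [trace_smul, trace_one, Fintype.card_fin, det_smul, det_one, smul_eq_mul]
  ring

theorem trace_eq_zero_of_sq_eq_smul_one {M : M₂} (hM : ∀ c : F, M ≠ c • 1) {c : F}
    (h : M ^ 2 = c • 1) : M.trace = 0 := by
  by_contra htr
  have hsmul : M.trace • M = (c + M.det) • 1 := by
    rw [add_smul, ← h, sq_fin_two, sub_add_cancel]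
  apply hM (M.trace⁻¹ * (c + M.det))
  rw [← smul_smul, ← hsmul, inv_smul_smul₀ htr]

theorem exists_pow_eq_smul_one_of_trace_sq_eq_four (p : ℕ) [Fact p.Prime] [CharP F p]
    {M : M₂} (hdet : M.det = 1) (htr : M.trace ^ 2 = 4) :
    ∃ c : F, M ^ p = c • 1 := by
  obtain ⟨ε, hε, hεsq⟩ : ∃ ε : F, M.trace = 2 * ε ∧ ε ^ 2 = 1 := by
    rcases mul_eq_zero.mp (show (M.trace - 2) * (M.trace + 2) = 0 by linear_combination htr)
      with h | h
    · exact ⟨1, by linear_combination h, one_pow 2⟩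
    · exact ⟨-1, by linear_combination h, by ring⟩
  have hcomm : Commute M (ε • 1) := (Commute.one_right M).smul_right ε
  -- `M - ε` is nilpotent by Cayley–Hamilton, and the Frobenius kills it.
  have hnil : (M - ε • 1) ^ 2 = 0 := by
    rw [hcomm.sub_sq, sq_fin_two, hε, hdet, _root_.smul_pow, one_pow, hεsq]
    simp only [Matrix.mul_smul, mul_one, two_mul]
    module
  refine ⟨ε ^ p, ?_⟩
  rw [← sub_eq_zero, ← one_pow p, ← _root_.smul_pow, ← sub_pow_char_of_commute _ hcomm]
  exact pow_eq_zero_of_le (Fact.out : p.Prime).two_le hnil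

theorem exists_mul_eq_mul_companion {M : M₂} (hM : ∀ c : F, M ≠ c • 1) :
    ∃ U : GL (Fin 2) F, M * U = U * !![0, -M.det; 1, M.trace] := by
  -- The columns of `U` are `v` and `M v`, for a vector `v = (s, t)` that is not an eigenvector.
  have key : ∀ s t : F, M * !![s, M 0 0 * s + M 0 1 * t; t, M 1 0 * s + M 1 1 * t] =
      !![s, M 0 0 * s + M 0 1 * t; t, M 1 0 * s + M 1 1 * t] * !![0, -M.det; 1, M.trace] := by
    intro s t
    ext i j
    fin_cases i <;> fin_cases j <;> simp [mul_apply, det_fin_two, trace_fin_two] <;> ring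
  obtain ⟨s, t, hst⟩ :
      ∃ s t : F, M 1 0 * s ^ 2 + (M 1 1 - M 0 0) * s * t - M 0 1 * t ^ 2 ≠ 0 := by
    by_contra! h
    apply hM (M 0 0)
    have h10 : M 1 0 = 0 := by simpa using h 1 0
    have h01 : M 0 1 = 0 := by simpa using h 0 1
    have h11 : M 1 1 = M 0 0 := sub_eq_zero.mp (by simpa [h10, h01] using h 1 1)
    ext i j
    fin_cases i <;> fin_cases j <;> simp [h10, h01, h11]
  have hU : IsUnit !![s, M 0 0 * s + M 0 1 * t; t, M 1 0 * s + M 1 1 * t] := by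
    rw [isUnit_iff_isUnit_det, isUnit_iff_ne_zero, det_fin_two_of]
    convert hst using 1
    ring
  exact ⟨hU.unit, key s t⟩

theorem exists_mul_eq_mul_of_trace_eq_of_det_eq {M N : M₂} (hM : ∀ c : F, M ≠ c • 1)
    (hN : ∀ c : F, N ≠ c • 1) (htr : N.trace = M.trace) (hdet : N.det = M.det) :
    ∃ U : GL (Fin 2) F, M * U = U * N := by
  obtain ⟨U, hU⟩ := exists_mul_eq_mul_companion hM
  obtain ⟨V, hV⟩ := exists_mul_eq_mul_companion hN
  rw [htr, hdet] at hV
  have hVinv : SemiconjBy (↑V⁻¹ : M₂) N _ := SemiconjBy.units_inv_symm_left hV.symm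
  exact ⟨U * V⁻¹, (SemiconjBy.mul_left hU.symm hVinv).symm⟩

theorem exists_specialLinearGroup_mul_eq_mul [Fintype F] {X W : M₂}
    (hX : ∀ c : F, X ≠ c • 1) (hW : ∀ c : F, W ≠ c • 1)
    (hX0 : X.trace = 0) (hW0 : W.trace = 0) (hdet : W.det = X.det) (hD : X.det ≠ 0) :
    ∃ S : SpecialLinearGroup (Fin 2) F, X * S = S * W := by
  obtain ⟨U, hU⟩ := exists_mul_eq_mul_of_trace_eq_of_det_eq hX hW (hW0.trans hX0.symm) hdet
  -- Correct the determinant of `U` by an element `a + b X` of the centralizer of `X`.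
  obtain ⟨a, b, hab⟩ := FiniteField.exists_sq_add_mul_sq_eq hD (U : M₂).det⁻¹
  have hcomm : Commute X (a • 1 + b • X) :=
    ((Commute.one_right X).smul_right a).add_right ((Commute.refl X).smul_right b)
  refine ⟨⟨(a • 1 + b • X) * U, ?_⟩, ?_⟩
  · rw [det_mul, det_smul_one_add_smul, hX0, mul_zero, add_zero, mul_comm _ X.det, hab,
      inv_mul_cancel₀ (isUnits_det_units U).ne_zero]
  · rw [SpecialLinearGroup.coe_mk, ← mul_assoc, hcomm.eq, mul_assoc, hU, mul_assoc]

theorem exists_trace_eq_zero_det_eq_trace_mul_eq [Fintype F] {X : M₂}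
    (hX : ∀ c : F, X ≠ c • 1) (hX0 : X.trace = 0) (hD : X.det ≠ 0) (τ : F) :
    ∃ W : M₂, W.trace = 0 ∧ W.det = X.det ∧ (X * W).trace = X.det * τ := by
  obtain ⟨U, hU⟩ := exists_mul_eq_mul_companion hX
  obtain ⟨a, b, hab⟩ := FiniteField.exists_sq_add_mul_eq_zero hD τ
  set D := X.det
  -- `W` is written down in the basis in which `X` is the companion matrix `!![0, -D; 1, 0]`;
  -- `hab` says `det W₀ = D`.
  set W₀ : M₂ := !![a, D * (τ + b); b, -a]
  have hXW : X * (U * W₀ * (↑U⁻¹ : M₂)) = U * (!![0, -D; 1, 0] * W₀) * (↑U⁻¹ : M₂) := by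
    rw [← mul_assoc, ← mul_assoc, hU, hX0, mul_assoc (U : M₂)]
  refine ⟨U * W₀ * (↑U⁻¹ : M₂), ?_, ?_, ?_⟩
  · rw [trace_units_conj, trace_fin_two_of, add_neg_cancel]
  · rw [det_units_conj, det_fin_two_of]
    linear_combination -hab
  · rw [hXW, trace_units_conj, mul_fin_two, trace_fin_two_of]
    ring

end Matrix

namespace PGL

variable {F : Type} [Field F]

local notation "M₂" => Matrix (Fin 2) (Fin 2) F
local notation "π" => QuotientGroup.mk' (Subgroup.center (GL (Fin 2) F))

open Matrix.SpecialLinearGroup (toGL coe_GL_coe_matrix)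

theorem mk_eq_one_iff (A : GL (Fin 2) F) : π A = 1 ↔ ∃ c : F, (A : M₂) = c • 1 := by
  rw [QuotientGroup.mk'_apply, QuotientGroup.eq_one_iff,
    GeneralLinearGroup.mem_center_iff_val_mem_range_scalar]
  simp only [Set.mem_range, scalar_apply, smul_one_eq_diagonal, eq_comm]

theorem mk_pow_eq_one_iff (A : GL (Fin 2) F) (k : ℕ) :
    π A ^ k = 1 ↔ ∃ c : F, (A : M₂) ^ k = c • 1 := by
  rw [← map_pow, mk_eq_one_iff, Units.val_pow_eq_pow_val]

theorem mk_eq_mk_of_val_eq_smul {A B : GL (Fin 2) F} {c : F} (h : (A : M₂) = c • B) :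
    π A = π B := by
  rw [← div_eq_one, ← map_div, mk_eq_one_iff]
  exact ⟨c, by rw [div_eq_mul_inv, Units.val_mul, h, smul_mul_assoc, Units.mul_inv]⟩

theorem orderOf_mk_eq_of_trace_eq_of_det_eq {A B : GL (Fin 2) F} (hA : π A ≠ 1) (hB : π B ≠ 1)
    {c : F} (htr : (A : M₂).trace = c * (B : M₂).trace)
    (hdet : (A : M₂).det = c ^ 2 * (B : M₂).det) :
    orderOf (π A) = orderOf (π B) := by
  rw [Ne, mk_eq_one_iff, not_exists] at hA hB
  have hc : c ≠ 0 := by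
    rintro rfl
    simp [(isUnits_det_units A).ne_zero] at hdet
  have hcB : ∀ d : F, c • (B : M₂) ≠ d • 1 := by
    intro d h
    apply hB (c⁻¹ * d)
    rw [← smul_smul, ← h, inv_smul_smul₀ hc]
  obtain ⟨U, hU⟩ := exists_mul_eq_mul_of_trace_eq_of_det_eq hA hcB
    (by rw [trace_smul, htr, smul_eq_mul]) (by rw [det_smul, hdet, Fintype.card_fin])
  refine (SemiconjBy.orderOf_eq (π U) ?_).symm
  rw [SemiconjBy, ← map_mul, ← map_mul]
  exact (mk_eq_mk_of_val_eq_smul (by rw [Units.val_mul, Units.val_mul, hU, mul_smul_comm])).symm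

theorem exists_mem_PSL_orderOf_mul_conj_eq [Fintype F] {x : PGL 2 F} (hx : orderOf x = 2)
    {Z : SpecialLinearGroup (Fin 2) F} (hZ0 : (Z : M₂).trace ≠ 0)
    (hZ4 : (Z : M₂).trace ^ 2 ≠ 4) :
    ∃ g ∈ PSLinPGL 2 F, orderOf (x * (g⁻¹ * x * g)) = orderOf (π (toGL Z)) := by
  obtain ⟨A, rfl⟩ := QuotientGroup.mk'_surjective _ x
  set X : M₂ := ↑A
  set τ := (Z : M₂).trace
  have hX : ∀ c : F, X ≠ c • 1 := by
    rw [← not_exists, ← mk_eq_one_iff, ← orderOf_eq_one_iff, hx]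
    decide
  obtain ⟨c, hc⟩ := (mk_pow_eq_one_iff A 2).mp (orderOf_dvd_iff_pow_eq_one.mp hx.dvd)
  have hX0 : X.trace = 0 := trace_eq_zero_of_sq_eq_smul_one hX hc
  have hD : X.det ≠ 0 := (isUnits_det_units A).ne_zero
  obtain ⟨W, hW0, hWdet, hXW⟩ := exists_trace_eq_zero_det_eq_trace_mul_eq hX hX0 hD τ
  have hW : ∀ c : F, W ≠ c • 1 := by
    rintro c rfl
    simp [hX0, hD, hZ0] at hXW
  obtain ⟨S, hS⟩ := exists_specialLinearGroup_mul_eq_mul hX hW hX0 hW0 hWdet hD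
  refine ⟨π (toGL S), ⟨_, ⟨S, rfl⟩, rfl⟩, ?_⟩
  have hval : ((A * ((toGL S)⁻¹ * A * toGL S) : GL (Fin 2) F) : M₂) = X * W := by
    have hSW : (toGL S : M₂) * W = X * (toGL S : M₂) := hS.symm
    rw [Units.val_mul, Units.val_mul, Units.val_mul, mul_assoc _ X, ← hSW,
      Units.inv_mul_cancel_left]
  rw [← map_inv, ← map_mul, ← map_mul, ← map_mul]
  apply orderOf_mk_eq_of_trace_eq_of_det_eq (c := X.det)
  · rw [Ne, mk_eq_one_iff, not_exists, hval]
    refine ne_smul_one_of_trace_sq_ne fun h => hZ4 ?_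
    rw [hXW, det_mul, hWdet] at h
    have : X.det ^ 2 * (τ ^ 2 - 4) = 0 := by linear_combination h
    simpa [hD, sub_eq_zero] using this
  · rw [Ne, mk_eq_one_iff, not_exists, coe_GL_coe_matrix]
    exact ne_smul_one_of_trace_sq_ne (by rwa [Z.det_coe, mul_one])
  · rw [hval, hXW, coe_GL_coe_matrix]
  · rw [hval, det_mul, hWdet, coe_GL_coe_matrix, Z.det_coe]
    ring

theorem exists_mem_PSL_orderOf_mul_conj_eq_prime [Fintype F] {r : ℕ} (hr : r.Prime)
    (hr2 : r ≠ 2) (hrp : r ≠ ringChar F) (hrL : r ∣ Nat.card (PSLinPGL 2 F)) {x : PGL 2 F}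
    (hx : orderOf x = 2) : ∃ g ∈ PSLinPGL 2 F, orderOf (x * (g⁻¹ * x * g)) = r := by
  have : Fact r.Prime := ⟨hr⟩
  have : Fact (ringChar F).Prime := ⟨CharP.char_is_prime F _⟩
  obtain ⟨z, hz⟩ := exists_prime_orderOf_dvd_card' r hrL
  obtain ⟨_, ⟨Z, rfl⟩, hZ⟩ := z.2
  have hZr : orderOf (π (toGL Z)) = r := by
    rw [hZ, Subgroup.orderOf_coe, hz]
  have hpow_ne_one {p : ℕ} (hp : p.Prime) (hpr : p ≠ r) : π (toGL Z) ^ p ≠ 1 := fun h =>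
    hpr ((Nat.prime_dvd_prime_iff_eq hr hp).mp (hZr ▸ orderOf_dvd_of_pow_eq_one h)).symm
  rw [← hZr]
  refine exists_mem_PSL_orderOf_mul_conj_eq hx (fun h0 => ?_) (fun h4 => ?_)
  · refine hpow_ne_one Nat.prime_two hr2.symm ((mk_pow_eq_one_iff _ 2).mpr ⟨-1, ?_⟩)
    rw [sq_fin_two, coe_GL_coe_matrix, h0, Z.det_coe, zero_smul, zero_sub, neg_smul]
  · exact hpow_ne_one Fact.out hrp.symm ((mk_pow_eq_one_iff _ _).mpr
      (exists_pow_eq_smul_one_of_trace_sq_eq_four _ Z.det_coe h4))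

end PGL

theorem statement_5_general (q : ℕ)
    (F : Type) [Field F] [Fintype F] (hF : Fintype.card F = q)
    (r : ℕ) (hr : r.Prime) (hrodd : Odd r)
    (hrL : r ∣ Nat.card (PSLinPGL 2 F)) (hrq : ¬ r ∣ q)
    (x : PGL 2 F) (hx : orderOf x = 2) :
    IsLeast {m : ℕ | ∃ g : Fin m → PGL 2 F, (∀ i, g i ∈ PSLinPGL 2 F) ∧
        r ∣ Nat.card (Subgroup.closure (Set.range fun i => (g i)⁻¹ * x * g i)
          : Subgroup (PGL 2 F))} 2 ∧
    ∃ g₁ g₂ : PGL 2 F, g₁ ∈ PSLinPGL 2 F ∧ g₂ ∈ PSLinPGL 2 F ∧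
      r ∣ Nat.card (Subgroup.closure {g₁⁻¹ * x * g₁, g₂⁻¹ * x * g₂} : Subgroup (PGL 2 F)) := by
  have hr2 : r ≠ 2 := hrodd.ne_two_of_dvd_nat dvd_rfl
  have hrp : r ≠ ringChar F := by
    rintro rfl
    exact hrq (hF ▸ ringChar.dvd (Nat.cast_card_eq_zero F))
  obtain ⟨g, hg, hord⟩ := PGL.exists_mem_PSL_orderOf_mul_conj_eq_prime hr hr2 hrp hrL hx
  have hdvd : r ∣ Nat.card (Subgroup.closure {(1 : PGL 2 F)⁻¹ * x * 1, g⁻¹ * x * g}) := by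
    rw [inv_one, mul_one, one_mul, ← hord]
    exact Subgroup.orderOf_dvd_natCard _ (mul_mem (Subgroup.subset_closure (.inl rfl))
      (Subgroup.subset_closure (.inr rfl)))
  refine ⟨⟨⟨![1, g], ?_, ?_⟩, fun m ⟨g, _, h⟩ => two_le_of_dvd_card_closure_conj ?_ h⟩,
    1, g, one_mem _, hg, hdvd⟩
  · intro i
    fin_cases i
    exacts [one_mem _, hg]
  · have hrange : (Set.range fun i => (![1, g] i)⁻¹ * x * ![1, g] i) =
        {(1 : PGL 2 F)⁻¹ * x * 1, g⁻¹ * x * g} := by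
      ext y
      simp [Fin.exists_fin_two, eq_comm]
    rwa [hrange]
  · rwa [hx, Nat.prime_dvd_prime_iff_eq hr Nat.prime_two]

theorem statement_5 (q : ℕ) (hq : IsPrimePow q) (hq4 : 4 ≤ q)
    (F : Type) [Field F] [Fintype F] (hF : Fintype.card F = q)
    (r : ℕ) (hr : r.Prime) (hrodd : Odd r)
    (hrL : r ∣ Nat.card (PSLinPGL 2 F)) (hrq : ¬ r ∣ q)
    (x : PGL 2 F) (hx : orderOf x = 2) :
    IsLeast {m : ℕ | ∃ g : Fin m → PGL 2 F, (∀ i, g i ∈ PSLinPGL 2 F) ∧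
        r ∣ Nat.card (Subgroup.closure (Set.range fun i => (g i)⁻¹ * x * g i)
          : Subgroup (PGL 2 F))} 2 ∧
    ∃ g₁ g₂ : PGL 2 F, g₁ ∈ PSLinPGL 2 F ∧ g₂ ∈ PSLinPGL 2 F ∧
      r ∣ Nat.card (Subgroup.closure {g₁⁻¹ * x * g₁, g₂⁻¹ * x * g₂} : Subgroup (PGL 2 F)) :=
  statement_5_general q F hF r hr hrodd hrL hrq x hx
end

section
/- Let V be a finite-dimensional vector space over a finite field F_q, and suppose V = U ⊕ W with 2 ≤ dim U ≤ dim W. Let L_U ≤ GL(U) and L_W ≤ GL(W) be subgroups acting irreducibly on U and on W respectively, and let L = L_U × L_W be the corresponding subgroup of GL(V) (acting block-diagonally with respect to the decomposition V = U ⊕ W). Suppose x ∈ L is such that its projection to L_U acts irreducibly on U. Then there exists g ∈ SL(V) such that the subgroup G = ⟨L, g⁻¹xg⟩ acts irreducibly on V. -/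
/-- The special linear group `SL(V)` as the subgroup of `GL(V) = (V ≃ₗ[F] V)`
consisting of transformations of determinant `1`. -/
noncomputable def SLV (F V : Type) [Field F] [AddCommGroup V] [Module F V] :
    Subgroup (V ≃ₗ[F] V) :=
  MonoidHom.ker LinearEquiv.det

/-- A subgroup `G ≤ GL(V)` acts irreducibly on `V` if the only `G`-invariant subspaces
of `V` are `0` and `V`. -/
def ActsIrreducibly (F : Type) {V : Type} [Field F] [AddCommGroup V] [Module F V]
    (G : Subgroup (V ≃ₗ[F] V)) : Prop :=
  ∀ X : Submodule F V, (∀ g ∈ G, ∀ v ∈ X, g v ∈ X) → X = ⊥ ∨ X = ⊤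

/-- The block-diagonal embedding `GL(U) × GL(W) → GL(V)` associated with a direct sum
decomposition `V = U ⊕ W`. -/
noncomputable def blockMap (F : Type) {V : Type} [Field F] [AddCommGroup V] [Module F V]
    (U W : Submodule F V) (h : IsCompl U W) :
    ((↥U ≃ₗ[F] ↥U) × (↥W ≃ₗ[F] ↥W)) →* (V ≃ₗ[F] V) where
  toFun p := ((Submodule.prodEquivOfIsCompl U W h).symm.trans (p.1.prodCongr p.2)).trans
      (Submodule.prodEquivOfIsCompl U W h)
  map_one' := by
    ext v
    simp [LinearEquiv.trans_apply, Submodule.projection_add_projection_eq_self]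
  map_mul' := by
    intro p q
    ext v
    show (Submodule.prodEquivOfIsCompl U W h) _ =
      (((Submodule.prodEquivOfIsCompl U W h).symm.trans (p.1.prodCongr p.2)).trans
        (Submodule.prodEquivOfIsCompl U W h))
      ((((Submodule.prodEquivOfIsCompl U W h).symm.trans (q.1.prodCongr q.2)).trans
        (Submodule.prodEquivOfIsCompl U W h)) v)
    simp only [LinearEquiv.trans_apply, LinearEquiv.prodCongr_apply, LinearEquiv.symm_apply_apply]
    rfl
/-!
Pick `u₀ ≠ 0` in `U`, `w₀ ≠ 0` in `W` and `w₁ ∉ F w₀`, and linear forms `φ` on `U`, `ψ` on `W`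
with `φ u₀ = 0 = ψ w₀` and `φ (a u₀) = 1 = ψ w₁`; `φ` exists because `a`, acting irreducibly in
dimension `≥ 2`, has no eigenvector. Conjugating `x` by the transvection
`g = 1 + (φ ⊕ ψ)(·) (u₀ + w₀)` gives `y = g⁻¹xg` with `y u₀ ∉ U` and `y w₁ ∉ W`.
A subspace `X` invariant under `L` meets `U` in `0` or `U` and `W` in `0` or `W`. If it contains
one summand and meets the other trivially it equals that summand, which `y` does not preserve; if
it meets both trivially, the `W`-components of its vectors are fixed by `L_W`, hence zero, so
`X = 0`.
-/

open Module Submodule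

section LinearAlgebra

variable {K M : Type*} [Field K] [AddCommGroup M] [Module K M]

theorem eq_zero_of_span_singleton_eq_bot_or_eq_top (hM : 2 ≤ finrank K M) {w : M}
    (hw : span K {w} = ⊥ ∨ span K {w} = ⊤) : w = 0 := by
  rcases hw with hw | hw
  · exact span_singleton_eq_bot.mp hw
  · have := finrank_span_le_card (R := K) ({w} : Set M)
    rw [hw, finrank_top] at this
    simp only [Set.toFinset_singleton, Finset.card_singleton] at this
    omega

theorem apply_notMem_span_singleton (hM : 2 ≤ finrank K M) {f : M →ₗ[K] M}
    (hf : ∀ X : Submodule K M, (∀ v ∈ X, f v ∈ X) → X = ⊥ ∨ X = ⊤) {u : M} (hu : u ≠ 0) :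
    f u ∉ span K {u} := by
  refine fun hfu ↦ hu (eq_zero_of_span_singleton_eq_bot_or_eq_top hM (hf _ fun v hv ↦ ?_))
  obtain ⟨c, rfl⟩ := mem_span_singleton.mp hv
  rw [map_smul]
  exact smul_mem _ c hfu

theorem exists_ne_zero_notMem_span_singleton (hM : 2 ≤ finrank K M) :
    ∃ w₀ w₁ : M, w₀ ≠ 0 ∧ w₁ ∉ span K {w₀} := by
  have : Nontrivial M := nontrivial_of_finrank_pos (R := K) (by omega)
  obtain ⟨w₀, hw₀⟩ := exists_ne (0 : M)
  have hspan : span K {w₀} ≠ ⊤ := fun h ↦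
    hw₀ (eq_zero_of_span_singleton_eq_bot_or_eq_top hM (.inr h))
  obtain ⟨w₁, -, hw₁⟩ := SetLike.exists_of_lt hspan.lt_top
  exact ⟨w₀, w₁, hw₀, hw₁⟩

theorem exists_dual_apply_eq_zero_apply_eq_one {v w : M} (hw : w ∉ span K {v}) :
    ∃ f : Dual K M, f v = 0 ∧ f w = 1 := by
  obtain ⟨f, hfw, hf⟩ := exists_dual_map_eq_bot_of_notMem hw inferInstance
  refine ⟨(f w)⁻¹ • f, ?_, inv_mul_cancel₀ hfw⟩
  have : f v ∈ (span K {v}).map f := mem_map_of_mem (mem_span_singleton_self v)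
  simp_all

end LinearAlgebra

section Complement

variable {R M : Type*} [Ring R] [AddCommGroup M] [Module R M] {U W : Submodule R M}

theorem IsCompl.add_mem_left_iff (h : IsCompl U W) {u w : M} (hu : u ∈ U) (hw : w ∈ W) :
    u + w ∈ U ↔ w = 0 := by
  rw [U.add_mem_iff_right hu]
  exact ⟨fun hwU ↦ disjoint_def.mp h.disjoint w hwU hw, fun hw ↦ hw ▸ U.zero_mem⟩

theorem IsCompl.add_mem_right_iff (h : IsCompl U W) {u w : M} (hu : u ∈ U) (hw : w ∈ W) :
    u + w ∈ W ↔ u = 0 := by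
  rw [add_comm]
  exact h.symm.add_mem_left_iff hw hu

theorem IsCompl.exists_add_eq (h : IsCompl U W) (v : M) : ∃ (u : U) (w : W), (u : M) + w = v := by
  obtain ⟨u, hu, w, hw, huw⟩ := mem_sup.mp (h.sup_eq_top ▸ mem_top : v ∈ U ⊔ W)
  exact ⟨⟨u, hu⟩, ⟨w, hw⟩, huw⟩

end Complement

section BlockMap

variable {F V : Type} [Field F] [AddCommGroup V] [Module F V] {U W : Submodule F V}
  (h : IsCompl U W)

theorem blockMap_apply_add (c : U ≃ₗ[F] U) (d : W ≃ₗ[F] W) (u : U) (w : W) :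
    blockMap F U W h (c, d) (u + w) = (c u : V) + d w := by
  change prodEquivOfIsCompl U W h ((c.prodCongr d) ((prodEquivOfIsCompl U W h).symm (u + w))) = _
  rw [show (prodEquivOfIsCompl U W h).symm (u + w) = (u, w) from
    (LinearEquiv.symm_apply_eq _).mpr rfl]
  rfl

@[simp]
theorem blockMap_apply_left (c : U ≃ₗ[F] U) (d : W ≃ₗ[F] W) (u : U) :
    blockMap F U W h (c, d) u = c u := by
  simpa using blockMap_apply_add h c d u 0

@[simp]
theorem blockMap_apply_right (c : U ≃ₗ[F] U) (d : W ≃ₗ[F] W) (w : W) :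
    blockMap F U W h (c, d) w = d w := by
  simpa using blockMap_apply_add h c d 0 w

end BlockMap

section Irreducibility

variable {F V : Type} [Field F] [AddCommGroup V] [Module F V]

theorem ActsIrreducibly.eq_zero_of_forall_apply_eq {G : Subgroup (V ≃ₗ[F] V)}
    (hG : ActsIrreducibly F G) (hV : 2 ≤ finrank F V) {w : V} (hw : ∀ g ∈ G, g w = w) :
    w = 0 := by
  refine eq_zero_of_span_singleton_eq_bot_or_eq_top hV (hG _ fun g hg v hv ↦ ?_)
  obtain ⟨c, rfl⟩ := mem_span_singleton.mp hv
  rw [map_smul, hw g hg]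
  exact hv

theorem ActsIrreducibly.disjoint_or_le {U X : Submodule F V} {G : Subgroup (U ≃ₗ[F] U)}
    (hG : ActsIrreducibly F G) (hX : ∀ g ∈ G, ∀ u : U, (u : V) ∈ X → (g u : V) ∈ X) :
    Disjoint U X ∨ U ≤ X := by
  rw [disjoint_iff_comap_eq_bot, ← comap_subtype_eq_top]
  exact hG _ hX

variable {U W : Submodule F V} (h : IsCompl U W) {LU : Subgroup (U ≃ₗ[F] U)}
  {LW : Subgroup (W ≃ₗ[F] W)}

theorem eq_bot_of_disjoint_of_forall_blockMap_mem (hLW : ActsIrreducibly F LW)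
    (hW : 2 ≤ finrank F W) {X : Submodule F V}
    (hX : ∀ d ∈ LW, ∀ v ∈ X, blockMap F U W h (1, d) v ∈ X) (hUX : Disjoint U X)
    (hWX : Disjoint W X) : X = ⊥ := by
  refine eq_bot_iff.mpr fun v hv ↦ ?_
  obtain ⟨u, w, rfl⟩ := h.exists_add_eq v
  have hw : w = 0 := hLW.eq_zero_of_forall_apply_eq hW fun d hd ↦ by
    have hdw : (d w : V) - w ∈ X := by
      simpa [blockMap_apply_add] using X.sub_mem (hX d hd _ hv) hv
    exact Subtype.ext (sub_eq_zero.mp (disjoint_def.mp hWX _ (W.sub_mem (d w).2 w.2) hdw))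
  subst hw
  simpa using disjoint_def.mp hUX _ u.2 (by simpa using hv)

theorem actsIrreducibly_map_blockMap_sup_closure (hLU : ActsIrreducibly F LU)
    (hLW : ActsIrreducibly F LW) (hW : 2 ≤ finrank F W) {y : V ≃ₗ[F] V} {u w : V}
    (hu : u ∈ U) (hyu : y u ∉ U) (hw : w ∈ W) (hyw : y w ∉ W) :
    ActsIrreducibly F ((LU.prod LW).map (blockMap F U W h) ⊔ Subgroup.closure {y}) := by
  intro X hX
  have hL : ∀ c ∈ LU, ∀ d ∈ LW, ∀ v ∈ X, blockMap F U W h (c, d) v ∈ X := fun c hc d hd ↦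
    hX _ (Subgroup.mem_sup_left (Subgroup.mem_map_of_mem _ ⟨hc, hd⟩))
  have hy : ∀ v ∈ X, y v ∈ X :=
    hX y (Subgroup.mem_sup_right (Subgroup.mem_closure_singleton_self y))
  have hUX : Disjoint U X ∨ U ≤ X :=
    hLU.disjoint_or_le fun c hc u hu ↦ by simpa using hL c hc 1 LW.one_mem _ hu
  have hWX : Disjoint W X ∨ W ≤ X :=
    hLW.disjoint_or_le fun d hd w hw ↦ by simpa using hL 1 LU.one_mem d hd _ hw
  rcases hUX with hUX | hUX <;> rcases hWX with hWX | hWX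
  · exact .inl (eq_bot_of_disjoint_of_forall_blockMap_mem h hLW hW (hL 1 LU.one_mem) hUX hWX)
  · rw [← (le_iff_eq_of_codisjoint_of_disjoint h.codisjoint.symm hUX).mp hWX] at hy
    exact absurd (hy w hw) hyw
  · rw [← (le_iff_eq_of_codisjoint_of_disjoint h.codisjoint hWX).mp hUX] at hy
    exact absurd (hy u hu) hyu
  · exact .inr (eq_top_iff.mpr (h.sup_eq_top ▸ sup_le hUX hWX))

end Irreducibility

section Conjugate

variable {F V : Type} [Field F] [AddCommGroup V] [Module F V] {U W : Submodule F V}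
  (h : IsCompl U W)

theorem exists_mem_SLV_conj_blockMap_notMem (hU : 2 ≤ finrank F U) (hW : 2 ≤ finrank F W)
    {a : U ≃ₗ[F] U} (ha : ∀ X : Submodule F U, (∀ v ∈ X, a v ∈ X) → X = ⊥ ∨ X = ⊤)
    (b : W ≃ₗ[F] W) :
    ∃ g ∈ SLV F V, (∃ u ∈ U, (g⁻¹ * blockMap F U W h (a, b) * g) u ∉ U) ∧
      ∃ w ∈ W, (g⁻¹ * blockMap F U W h (a, b) * g) w ∉ W := by
  have : Nontrivial U := nontrivial_of_finrank_pos (R := F) (by omega)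
  obtain ⟨u₀, hu₀⟩ := exists_ne (0 : U)
  have hau₀ : a u₀ ∉ span F {u₀} := apply_notMem_span_singleton hU (f := a) ha hu₀
  obtain ⟨φ, hφu₀, hφau₀⟩ := exists_dual_apply_eq_zero_apply_eq_one hau₀
  obtain ⟨w₀, w₁, hw₀, hw₁⟩ := exists_ne_zero_notMem_span_singleton hW
  obtain ⟨ψ, hψw₀, hψw₁⟩ := exists_dual_apply_eq_zero_apply_eq_one hw₁
  set f : Dual F V := LinearMap.ofIsCompl h φ ψ
  set v : V := u₀ + w₀
  have hfv : f v = 0 := by simp [f, v, LinearMap.ofIsCompl_apply_left, hφu₀, hψw₀]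
  set g := LinearEquiv.transvection hfv
  have hg : ∀ z, g z = z + f z • v := fun z ↦ rfl
  have hginv : ∀ z, g⁻¹ z = z - f z • v := fun z ↦ by
    rw [LinearEquiv.transvection.inv_eq hfv (by simp [hfv])]
    simp [LinearMap.transvection.apply, sub_eq_add_neg]
  refine ⟨g, MonoidHom.mem_ker.mpr (LinearEquiv.transvection.det_eq_one hfv),
    ⟨u₀, u₀.2, ?_⟩, w₁, w₁.2, ?_⟩
  · have hy : (g⁻¹ * blockMap F U W h (a, b) * g) u₀ =
        ((a u₀ - u₀ : U) : V) + ((-w₀ : W) : V) := by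
      simp [LinearEquiv.mul_apply, hg, hginv, f, v, LinearMap.ofIsCompl_apply_left, hφu₀, hφau₀]
      abel
    rw [hy, h.add_mem_left_iff (coe_mem _) (coe_mem _)]
    simpa using hw₀
  · have hxgw₁ : blockMap F U W h (a, b) (g w₁) = b w₁ + a u₀ + b w₀ := by
      simp [hg, f, v, hψw₁]
      abel
    set c := f (b w₁ + a u₀ + b w₀)
    have hy : (g⁻¹ * blockMap F U W h (a, b) * g) w₁ =
        ((a u₀ - c • u₀ : U) : V) + ((b w₁ + b w₀ - c • w₀ : W) : V) := by
      rw [LinearEquiv.mul_apply, LinearEquiv.mul_apply, hxgw₁, hginv]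
      push_cast
      module
    rw [hy, h.add_mem_right_iff (coe_mem _) (coe_mem _), ZeroMemClass.coe_eq_zero,
      sub_eq_zero]
    exact fun hc ↦ hau₀ (hc ▸ smul_mem _ c (mem_span_singleton_self u₀))

end Conjugate

theorem statement_8_general (F V : Type) [Field F]
    [AddCommGroup V] [Module F V]
    (U W : Submodule F V) (hUW : IsCompl U W)
    (hU2 : 2 ≤ Module.finrank F ↥U)
    (hUleW : Module.finrank F ↥U ≤ Module.finrank F ↥W)
    (LU : Subgroup (↥U ≃ₗ[F] ↥U)) (LW : Subgroup (↥W ≃ₗ[F] ↥W))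
    (hLU : ActsIrreducibly F LU) (hLW : ActsIrreducibly F LW)
    -- `L = L_U × L_W` as a block-diagonal subgroup of `GL(V)`
    (L : Subgroup (V ≃ₗ[F] V)) (hL : L = Subgroup.map (blockMap F U W hUW) (LU.prod LW))
    -- `x ∈ L`, with projection `a` to `L_U` acting irreducibly on `U`
    (x : V ≃ₗ[F] V) (a : ↥U ≃ₗ[F] ↥U) (b : ↥W ≃ₗ[F] ↥W)
    (hx : x = blockMap F U W hUW (a, b))
    (haIrr : ∀ X : Submodule F ↥U, (∀ v ∈ X, a v ∈ X) → X = ⊥ ∨ X = ⊤) :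
    -- there is `g ∈ SL(V)` such that `G = ⟨L, g⁻¹xg⟩` acts irreducibly on `V`
    ∃ g : V ≃ₗ[F] V, g ∈ SLV F V ∧
      ActsIrreducibly F (L ⊔ Subgroup.closure {g⁻¹ * x * g}) := by
  subst hL hx
  have hW2 : 2 ≤ finrank F W := hU2.trans hUleW
  obtain ⟨g, hg, ⟨u, hu, hyu⟩, w, hw, hyw⟩ :=
    exists_mem_SLV_conj_blockMap_notMem hUW hU2 hW2 haIrr b
  exact ⟨g, hg, actsIrreducibly_map_blockMap_sup_closure hUW hLU hLW hW2 hu hyu hw hyw⟩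

theorem statement_8 (F V : Type) [Field F] [Fintype F]
    [AddCommGroup V] [Module F V] [FiniteDimensional F V]
    (U W : Submodule F V) (hUW : IsCompl U W)
    (hU2 : 2 ≤ Module.finrank F ↥U)
    (hUleW : Module.finrank F ↥U ≤ Module.finrank F ↥W)
    (LU : Subgroup (↥U ≃ₗ[F] ↥U)) (LW : Subgroup (↥W ≃ₗ[F] ↥W))
    (hLU : ActsIrreducibly F LU) (hLW : ActsIrreducibly F LW)
    -- `L = L_U × L_W` as a block-diagonal subgroup of `GL(V)`
    (L : Subgroup (V ≃ₗ[F] V)) (hL : L = Subgroup.map (blockMap F U W hUW) (LU.prod LW))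
    -- `x ∈ L`, with projection `a` to `L_U` acting irreducibly on `U`
    (x : V ≃ₗ[F] V) (a : ↥U ≃ₗ[F] ↥U) (b : ↥W ≃ₗ[F] ↥W)
    (ha : a ∈ LU) (hb : b ∈ LW) (hx : x = blockMap F U W hUW (a, b))
    (haIrr : ∀ X : Submodule F ↥U, (∀ v ∈ X, a v ∈ X) → X = ⊥ ∨ X = ⊤) :
    -- there is `g ∈ SL(V)` such that `G = ⟨L, g⁻¹xg⟩` acts irreducibly on `V`
    ∃ g : V ≃ₗ[F] V, g ∈ SLV F V ∧
      ActsIrreducibly F (L ⊔ Subgroup.closure {g⁻¹ * x * g}) :=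
  statement_8_general F V U W hUW hU2 hUleW LU LW hLU hLW L hL x a b hx haIrr
end

section
/- Let q be a prime power and n ≥ 4. Let τ be the automorphism of L = PSL_n(q) induced by the map A ↦ (Aᵀ)⁻¹ of SL_n(F_q). Let K₀ be the image in PSL_n(q) of the subgroup {diag(A, 1) : A ∈ SL_{n−1}(F_q)} of SL_n(F_q) (block-diagonal matrices with an (n−1)×(n−1) block A of determinant 1 and final diagonal entry 1). Then τ maps K₀ onto K₀, the quotient K₀/Z(K₀) of K₀ by its center is isomorphic to PSL_{n−1}(q), and the automorphism that τ induces on K₀/Z(K₀) is nontrivial. -/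
open Matrix

variable (n : ℕ) (F : Type) [Field F]

/-- The automorphism `A ↦ (Aᵀ)⁻¹` of `SL_n(F)`. -/
noncomputable def tauSL : Matrix.SpecialLinearGroup (Fin n) F ≃*
    Matrix.SpecialLinearGroup (Fin n) F where
  toFun A := ⟨((A : Matrix (Fin n) (Fin n) F)ᵀ)⁻¹, by
    rw [Matrix.det_nonsing_inv, Matrix.det_transpose, A.prop, Ring.inverse_one]⟩
  invFun A := ⟨((A : Matrix (Fin n) (Fin n) F)ᵀ)⁻¹, by
    rw [Matrix.det_nonsing_inv, Matrix.det_transpose, A.prop, Ring.inverse_one]⟩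
  left_inv := by
    intro A
    ext i j
    show ((((A : Matrix (Fin n) (Fin n) F)ᵀ)⁻¹)ᵀ)⁻¹ i j = _
    rw [← Matrix.transpose_nonsing_inv,
      Matrix.nonsing_inv_nonsing_inv _ (by rw [Matrix.det_transpose, A.prop]; exact isUnit_one),
      Matrix.transpose_transpose]
  right_inv := by
    intro A
    ext i j
    show ((((A : Matrix (Fin n) (Fin n) F)ᵀ)⁻¹)ᵀ)⁻¹ i j = _
    rw [← Matrix.transpose_nonsing_inv,
      Matrix.nonsing_inv_nonsing_inv _ (by rw [Matrix.det_transpose, A.prop]; exact isUnit_one),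
      Matrix.transpose_transpose]
  map_mul' := by
    intro A B
    ext i j
    show (((A * B : Matrix.SpecialLinearGroup (Fin n) F) :
      Matrix (Fin n) (Fin n) F)ᵀ)⁻¹ i j = _
    rw [Matrix.SpecialLinearGroup.coe_mul, Matrix.transpose_mul, Matrix.mul_inv_rev]
    rfl

/-- Any automorphism maps the center onto the center. -/
theorem map_center_eq {G : Type} [Group G] (e : G ≃* G) :
    Subgroup.map e.toMonoidHom (Subgroup.center G) = Subgroup.center G := by
  ext x
  simp only [Subgroup.mem_map]
  constructor
  · rintro ⟨y, hy, rfl⟩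
    rw [Subgroup.mem_center_iff] at hy ⊢
    intro g
    have := hy (e.symm g)
    calc g * e.toMonoidHom y = e (e.symm g * y) := by simp
      _ = e (y * e.symm g) := by rw [this]
      _ = e.toMonoidHom y * g := by simp
  · intro hx
    refine ⟨e.symm x, ?_, by simp⟩
    rw [Subgroup.mem_center_iff] at hx ⊢
    intro g
    apply e.injective
    rw [_root_.map_mul, _root_.map_mul, MulEquiv.apply_symm_apply]
    exact hx (e g)

/-- The graph automorphism `τ` of `PSL_n(F)` induced by `A ↦ (Aᵀ)⁻¹`. -/
noncomputable def tauPSL : Matrix.ProjectiveSpecialLinearGroup (Fin n) F ≃*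
    Matrix.ProjectiveSpecialLinearGroup (Fin n) F :=
  QuotientGroup.congr _ _ (tauSL n F) (map_center_eq (tauSL n F))

/-- The identification `Fin (n-1) ⊕ Fin 1 ≃ Fin n` (for `n ≥ 1`). -/
def finSplit (hn : 1 ≤ n) : Fin (n - 1) ⊕ Fin 1 ≃ Fin n :=
  finSumFinEquiv.trans (finCongr (by omega))

/-- The block-diagonal embedding `SL_{n-1}(F) → SL_n(F)`, `A ↦ diag(A, 1)`. -/
noncomputable def diagEmbed (hn : 1 ≤ n) :
    Matrix.SpecialLinearGroup (Fin (n - 1)) F →* Matrix.SpecialLinearGroup (Fin n) F where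
  toFun A := ⟨(Matrix.fromBlocks (A : Matrix (Fin (n - 1)) (Fin (n - 1)) F) 0 0
      (1 : Matrix (Fin 1) (Fin 1) F)).submatrix (finSplit n hn).symm (finSplit n hn).symm, by
    rw [Matrix.det_submatrix_equiv_self, Matrix.det_fromBlocks_zero₂₁, A.prop,
      Matrix.det_one, one_mul]⟩
  map_one' := by
    apply Subtype.ext
    show (Matrix.fromBlocks ((1 : Matrix.SpecialLinearGroup (Fin (n - 1)) F) :
      Matrix (Fin (n - 1)) (Fin (n - 1)) F) 0 0 1).submatrix
      (finSplit n hn).symm (finSplit n hn).symm = 1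
    rw [Matrix.SpecialLinearGroup.coe_one, Matrix.fromBlocks_one,
      Matrix.submatrix_one_equiv]
  map_mul' := by
    intro A B
    apply Subtype.ext
    show (Matrix.fromBlocks ((A * B : Matrix.SpecialLinearGroup (Fin (n - 1)) F) :
        Matrix (Fin (n - 1)) (Fin (n - 1)) F) 0 0 1).submatrix
        (finSplit n hn).symm (finSplit n hn).symm =
      ((Matrix.fromBlocks (A : Matrix (Fin (n - 1)) (Fin (n - 1)) F) 0 0 1).submatrix
        (finSplit n hn).symm (finSplit n hn).symm) *
      ((Matrix.fromBlocks (B : Matrix (Fin (n - 1)) (Fin (n - 1)) F) 0 0 1).submatrix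
        (finSplit n hn).symm (finSplit n hn).symm)
    rw [Matrix.submatrix_mul_equiv _ _ _ (finSplit n hn).symm _,
      Matrix.fromBlocks_multiply, Matrix.SpecialLinearGroup.coe_mul]
    simp

/-!
`A ↦ diag(A, 1)` induces an injective homomorphism `SL_{n-1}(F) → PSL_n(F)` with image `K₀`
(a scalar matrix `diag(A, 1)` is `1`, its last entry being `1`), so `K₀ ≅ SL_{n-1}(F)` and
`K₀/Z(K₀) ≅ PSL_{n-1}(F)`. Transpose-inverse commutes with `A ↦ diag(A, 1)`, so `τ` preserves `K₀`
and acts there as the graph automorphism of `SL_{n-1}(F)`. That one is nontrivial modulo the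
centre: for the transvection `t = E₁₂(1)`, `τ(t) t⁻¹ = E₂₁(-1) E₁₂(-1)` does not commute with
`E₁₃(1)`, which needs a third index, i.e. `n - 1 ≥ 3`.
-/

theorem Subgroup.map_center_of_mulEquiv {G H : Type*} [Group G] [Group H] (e : G ≃* H) :
    (Subgroup.center G).map e.toMonoidHom = Subgroup.center H := by
  ext x
  rw [Subgroup.mem_map_equiv, ← SetLike.mem_coe, ← SetLike.mem_coe, Subgroup.coe_center,
    Subgroup.coe_center, ← MulEquivClass.apply_mem_center_iff e, MulEquiv.apply_symm_apply]

noncomputable def MulEquiv.quotientCenterCongr {G H : Type*} [Group G] [Group H] (e : G ≃* H) :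
    G ⧸ Subgroup.center G ≃* H ⧸ Subgroup.center H :=
  QuotientGroup.congr _ _ e (Subgroup.map_center_of_mulEquiv e)

theorem coe_tauSL (A : SpecialLinearGroup (Fin n) F) :
    (tauSL n F A : Matrix (Fin n) (Fin n) F) = (A : Matrix (Fin n) (Fin n) F)ᵀ⁻¹ := rfl

theorem coe_diagEmbed (hn : 1 ≤ n) (A : SpecialLinearGroup (Fin (n - 1)) F) :
    (diagEmbed n F hn A : Matrix (Fin n) (Fin n) F) =
      (fromBlocks (A : Matrix (Fin (n - 1)) (Fin (n - 1)) F) 0 0 1).submatrix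
        (finSplit n hn).symm (finSplit n hn).symm := rfl

theorem tauPSL_mk (A : SpecialLinearGroup (Fin n) F) :
    tauPSL n F (QuotientGroup.mk A) = QuotientGroup.mk (tauSL n F A) := rfl

theorem tauSL_transvection {i j : Fin n} (hij : i ≠ j) (b : F) :
    tauSL n F (SpecialLinearGroup.transvection hij b) =
      SpecialLinearGroup.transvection hij.symm (-b) := by
  apply Subtype.ext
  rw [coe_tauSL, SpecialLinearGroup.transvection_coe, transpose_add, transpose_one,
    transpose_single]
  exact inv_eq_right_inv
    congr(Subtype.val $(SpecialLinearGroup.transvection_mul_neg hij.symm b))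

theorem tauSL_diagEmbed (hn : 1 ≤ n) (A : SpecialLinearGroup (Fin (n - 1)) F) :
    tauSL n F (diagEmbed n F hn A) = diagEmbed n F hn (tauSL (n - 1) F A) := by
  have hA : IsUnit (A : Matrix (Fin (n - 1)) (Fin (n - 1)) F)ᵀ.det := by
    rw [det_transpose, A.prop]; exact isUnit_one
  apply Subtype.ext
  rw [coe_tauSL, coe_diagEmbed, coe_diagEmbed, coe_tauSL, transpose_submatrix,
    fromBlocks_transpose, transpose_zero, transpose_zero, transpose_one]
  apply inv_eq_right_inv
  rw [submatrix_mul_equiv _ _ _ (finSplit n hn).symm, fromBlocks_multiply, mul_nonsing_inv _ hA]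
  simp

theorem diagEmbed_injective (hn : 1 ≤ n) : Function.Injective (diagEmbed n F hn) := by
  intro A B h
  have hblocks := congr(toBlocks₁₁ (($h : Matrix (Fin n) (Fin n) F).submatrix
    (finSplit n hn) (finSplit n hn)))
  simp only [coe_diagEmbed, submatrix_submatrix, Equiv.symm_comp_self, submatrix_id_id,
    toBlocks_fromBlocks₁₁] at hblocks
  exact Subtype.ext hblocks

theorem eq_one_of_diagEmbed_mem_center (hn : 1 ≤ n) {A : SpecialLinearGroup (Fin (n - 1)) F}
    (hA : diagEmbed n F hn A ∈ Subgroup.center (SpecialLinearGroup (Fin n) F)) : A = 1 := by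
  -- a central element is the scalar given by any diagonal entry, and the last one is `1`
  have hscalar :=
    SpecialLinearGroup.scalar_eq_self_of_mem_center hA (finSplit n hn (Sum.inr 0))
  have hlast : (diagEmbed n F hn A : Matrix (Fin n) (Fin n) F)
      (finSplit n hn (Sum.inr 0)) (finSplit n hn (Sum.inr 0)) = 1 := by
    simp [coe_diagEmbed]
  rw [hlast, map_one] at hscalar
  apply diagEmbed_injective n F hn
  rw [map_one]
  exact Subtype.ext hscalar.symm

noncomputable def diagEmbedPSL (hn : 1 ≤ n) :
    SpecialLinearGroup (Fin (n - 1)) F →* ProjectiveSpecialLinearGroup (Fin n) F :=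
  (QuotientGroup.mk' _).comp (diagEmbed n F hn)

theorem diagEmbedPSL_injective (hn : 1 ≤ n) : Function.Injective (diagEmbedPSL n F hn) :=
  (injective_iff_map_eq_one _).mpr fun _ hA ↦
    eq_one_of_diagEmbed_mem_center n F hn ((QuotientGroup.eq_one_iff _).mp hA)

theorem tauPSL_diagEmbedPSL (hn : 1 ≤ n) (A : SpecialLinearGroup (Fin (n - 1)) F) :
    tauPSL n F (diagEmbedPSL n F hn A) = diagEmbedPSL n F hn (tauSL (n - 1) F A) := by
  simp only [diagEmbedPSL, MonoidHom.comp_apply, QuotientGroup.mk'_apply, tauPSL_mk,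
    tauSL_diagEmbed]

theorem map_tauPSL_range_diagEmbedPSL (hn : 1 ≤ n) :
    (diagEmbedPSL n F hn).range.map (tauPSL n F).toMonoidHom = (diagEmbedPSL n F hn).range := by
  have hcomm : (tauPSL n F).toMonoidHom.comp (diagEmbedPSL n F hn) =
      (diagEmbedPSL n F hn).comp (tauSL (n - 1) F).toMonoidHom :=
    MonoidHom.ext (tauPSL_diagEmbedPSL n F hn)
  rw [MonoidHom.map_range, hcomm, MonoidHom.range_comp,
    MonoidHom.range_eq_top.mpr (tauSL (n - 1) F).surjective, ← MonoidHom.range_eq_map]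

theorem nonempty_range_diagEmbedPSL_quotientCenter_mulEquiv (hn : 1 ≤ n) :
    Nonempty ((diagEmbedPSL n F hn).range ⧸ Subgroup.center (diagEmbedPSL n F hn).range ≃*
      ProjectiveSpecialLinearGroup (Fin (n - 1)) F) :=
  ⟨(MonoidHom.ofInjective (diagEmbedPSL_injective n F hn)).symm.quotientCenterCongr⟩

theorem tauSL_transvection_mul_inv_not_commute {i j k : Fin n} (hij : i ≠ j) (hik : i ≠ k)
    (hjk : j ≠ k) :
    let t := SpecialLinearGroup.transvection hij (1 : F)
    let u := SpecialLinearGroup.transvection hik (1 : F)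
    tauSL n F t * t⁻¹ * u ≠ u * (tauSL n F t * t⁻¹) := by
  intro t u h
  -- the `(j, k)` entries of the two sides are `-1` and `0`
  have hjk_entry := congr(($h : Matrix (Fin n) (Fin n) F) j k)
  simp only [t, u, tauSL_transvection, SpecialLinearGroup.transvection_inv,
    Matrix.SpecialLinearGroup.coe_mul, SpecialLinearGroup.transvection_coe] at hjk_entry
  simp [add_mul, mul_add, single_mul_single_of_ne, one_apply, hij, hik, hjk, hij.symm, hik.symm,
    hjk.symm] at hjk_entry

theorem exists_tauPSL_mul_inv_not_commute (hn : 4 ≤ n) :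
    ∃ k ∈ (diagEmbedPSL n F (Nat.one_le_of_lt hn)).range,
      ∃ k' ∈ (diagEmbedPSL n F (Nat.one_le_of_lt hn)).range,
      tauPSL n F k * k⁻¹ * k' ≠ k' * (tauPSL n F k * k⁻¹) := by
  let i : Fin (n - 1) := ⟨0, by omega⟩
  let j : Fin (n - 1) := ⟨1, by omega⟩
  let k : Fin (n - 1) := ⟨2, by omega⟩
  have hij : i ≠ j := by simp [i, j, Fin.ext_iff]
  have hik : i ≠ k := by simp [i, k, Fin.ext_iff]
  have hjk : j ≠ k := by simp [j, k, Fin.ext_iff]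
  refine ⟨_, ⟨SpecialLinearGroup.transvection hij 1, rfl⟩,
    _, ⟨SpecialLinearGroup.transvection hik 1, rfl⟩, fun h ↦ ?_⟩
  rw [tauPSL_diagEmbedPSL, ← map_inv, ← map_mul, ← map_mul, ← map_mul] at h
  exact tauSL_transvection_mul_inv_not_commute (n - 1) F hij hik hjk
    (diagEmbedPSL_injective n F _ h)

theorem statement_12 (hn : 4 ≤ n)
    (F' : Type) [Field F']
    (K₀ : Subgroup (Matrix.ProjectiveSpecialLinearGroup (Fin n) F'))
    (hK₀ : K₀ = Subgroup.map
      (QuotientGroup.mk' (Subgroup.center (Matrix.SpecialLinearGroup (Fin n) F')))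
      (diagEmbed n F' (by omega)).range) :
    -- `τ` maps `K₀` onto `K₀`, …
    Subgroup.map (tauPSL n F').toMonoidHom K₀ = K₀ ∧
    -- … `K₀/Z(K₀) ≅ PSL_{n-1}(q)`, …
    Nonempty ((↥K₀ ⧸ Subgroup.center ↥K₀) ≃*
      Matrix.ProjectiveSpecialLinearGroup (Fin (n - 1)) F') ∧
    -- … and the automorphism induced by `τ` on `K₀/Z(K₀)` is nontrivial
    (∃ k ∈ K₀, ∃ k' ∈ K₀,
      (tauPSL n F' k * k⁻¹) * k' ≠ k' * (tauPSL n F' k * k⁻¹)) := by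
  obtain rfl : K₀ = (diagEmbedPSL n F' (by omega)).range :=
    hK₀.trans (MonoidHom.range_comp _ _).symm
  exact ⟨map_tauPSL_range_diagEmbedPSL n F' _,
    nonempty_range_diagEmbedPSL_quotientCenter_mulEquiv n F' _,
    exists_tauPSL_mul_inv_not_commute n F' hn⟩
end
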